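/- arXiv:2112.01222 — 6 statements merged into one kernel-verified Lean document; each statement's English description precedes it below -/
import Mathlib

section
/- Let T : Fin n → Fin n → Fin n → ℝ with n ≥ 2, with partial traces T¹, T², T³ as above, and let F be the trace-free modification F i j k = T i j k - ((n+1)/((n-1)(n+2)))(T¹ᵢ δⱼₖ + T²ⱼ δᵢₖ + T³ₖ δᵢⱼ) + (1/((n-1)(n+2)))(T¹ⱼ δᵢₖ + T¹ₖ δᵢⱼ + T²ᵢ δⱼₖ + T²ₖ δᵢⱼ + T³ᵢ δⱼₖ + T³ⱼ δᵢₖ). Then ∑_{i,j,k} (F i j k)² = ∑_{i,j,k} (T i j k)² - ((n+1)/((n-1)(n+2)))(‖T¹‖² + ‖T²‖² + ‖T³‖²) + (2/((n-1)(n+2)))(⟨T¹,T²⟩ + ⟨T¹,T³⟩ + ⟨T²,T³⟩), where ‖·‖ and ⟨·,·⟩ are the Euclidean norm and inner product on Fin n → ℝ. -/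
/-!
Write `F = T + C` with `C i j k = δⱼₖ Pᵢ + δᵢₖ Qⱼ + δᵢⱼ Rₖ`. Pairing any tensor `G` with such a
`C` only sees the traces of `G`: `⟨G, C⟩ = ⟨G¹, P⟩ + ⟨G², Q⟩ + ⟨G³, R⟩`. The coefficients
`a = (n + 1) / ((n - 1)(n + 2))`, `b = 1 / ((n - 1)(n + 2))` in `F` satisfy `a = (n + 1) b` and
`n a - 2 b = 1`, which is exactly what makes `F` trace-free; hence `⟨F, C⟩ = 0` and
`‖F‖² = ⟨F, T⟩ = ‖T‖² + ⟨T¹, P⟩ + ⟨T², Q⟩ + ⟨T³, R⟩`, which expands to the stated formula.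
-/

open Finset

section PureTrace

variable {ι : Type*} [Fintype ι]

def trace₁ (T : ι → ι → ι → ℝ) (i : ι) : ℝ := ∑ l, T i l l

def trace₂ (T : ι → ι → ι → ℝ) (i : ι) : ℝ := ∑ l, T l i l

def trace₃ (T : ι → ι → ι → ℝ) (i : ι) : ℝ := ∑ l, T l l i

theorem trace₁_add (T S : ι → ι → ι → ℝ) : trace₁ (T + S) = trace₁ T + trace₁ S := by
  funext i; simp [trace₁, sum_add_distrib]

theorem trace₂_add (T S : ι → ι → ι → ℝ) : trace₂ (T + S) = trace₂ T + trace₂ S := by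
  funext i; simp [trace₂, sum_add_distrib]

theorem trace₃_add (T S : ι → ι → ι → ℝ) : trace₃ (T + S) = trace₃ T + trace₃ S := by
  funext i; simp [trace₃, sum_add_distrib]

variable [DecidableEq ι]

def pureTrace (P Q R : ι → ℝ) (i j k : ι) : ℝ :=
  (if j = k then P i else 0) + (if i = k then Q j else 0) + (if i = j then R k else 0)

theorem trace₁_pureTrace (P Q R : ι → ℝ) (i : ι) :
    trace₁ (pureTrace P Q R) i = Fintype.card ι * P i + Q i + R i := by
  simp [trace₁, pureTrace, sum_add_distrib]

theorem trace₂_pureTrace (P Q R : ι → ℝ) (i : ι) :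
    trace₂ (pureTrace P Q R) i = P i + Fintype.card ι * Q i + R i := by
  simp [trace₂, pureTrace, sum_add_distrib]

theorem trace₃_pureTrace (P Q R : ι → ℝ) (i : ι) :
    trace₃ (pureTrace P Q R) i = P i + Q i + Fintype.card ι * R i := by
  simp [trace₃, pureTrace, sum_add_distrib]

theorem sum_mul_pureTrace (G : ι → ι → ι → ℝ) (P Q R : ι → ℝ) :
    ∑ i, ∑ j, ∑ k, G i j k * pureTrace P Q R i j k
      = ∑ i, (trace₁ G i * P i + trace₂ G i * Q i + trace₃ G i * R i) := by
  simp only [pureTrace, mul_add, mul_ite, mul_zero, sum_add_distrib, sum_ite_eq,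
    mem_univ, if_true, trace₁, trace₂, trace₃, sum_mul]
  rw [sum_comm (γ := ι) (f := fun i j => G i j i * Q j)]
  simp only [sum_ite_irrel, sum_const_zero, sum_ite_eq, mem_univ, if_true]
  rw [sum_comm (f := fun i k => G i i k * R k)]

theorem sum_sq_eq_of_traceless {T F : ι → ι → ι → ℝ} {P Q R : ι → ℝ}
    (hF : F = T + pureTrace P Q R) (h₁ : trace₁ F = 0) (h₂ : trace₂ F = 0) (h₃ : trace₃ F = 0) :
    ∑ i, ∑ j, ∑ k, F i j k ^ 2
      = ∑ i, ∑ j, ∑ k, T i j k ^ 2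
        + ∑ i, (trace₁ T i * P i + trace₂ T i * Q i + trace₃ T i * R i) := by
  have hFC : ∑ i, ∑ j, ∑ k, F i j k * pureTrace P Q R i j k = 0 := by
    simp [sum_mul_pureTrace, h₁, h₂, h₃]
  have hsq : ∀ i j k, F i j k ^ 2
      = T i j k ^ 2 + T i j k * pureTrace P Q R i j k + F i j k * pureTrace P Q R i j k := by
    intro i j k
    rw [hF, Pi.add_apply, Pi.add_apply, Pi.add_apply]
    ring
  simp only [hsq, sum_add_distrib, hFC, add_zero, sum_mul_pureTrace]

noncomputable def traceFreePart (T : ι → ι → ι → ℝ) : ι → ι → ι → ℝ :=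
  let N : ℝ := Fintype.card ι
  let a := (N + 1) / ((N - 1) * (N + 2))
  let b := 1 / ((N - 1) * (N + 2))
  T + pureTrace (fun i => -a * trace₁ T i + b * (trace₂ T i + trace₃ T i))
    (fun i => -a * trace₂ T i + b * (trace₁ T i + trace₃ T i))
    (fun i => -a * trace₃ T i + b * (trace₁ T i + trace₂ T i))

theorem trace₁_traceFreePart (T : ι → ι → ι → ℝ) (h : Fintype.card ι ≠ 1) :
    trace₁ (traceFreePart T) = 0 := by
  have : (Fintype.card ι : ℝ) - 1 ≠ 0 := sub_ne_zero.mpr (by exact_mod_cast h)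
  funext i
  simp only [traceFreePart, trace₁_add, Pi.add_apply, trace₁_pureTrace, Pi.zero_apply]
  field_simp
  ring

theorem trace₂_traceFreePart (T : ι → ι → ι → ℝ) (h : Fintype.card ι ≠ 1) :
    trace₂ (traceFreePart T) = 0 := by
  have : (Fintype.card ι : ℝ) - 1 ≠ 0 := sub_ne_zero.mpr (by exact_mod_cast h)
  funext i
  simp only [traceFreePart, trace₂_add, Pi.add_apply, trace₂_pureTrace, Pi.zero_apply]
  field_simp
  ring

theorem trace₃_traceFreePart (T : ι → ι → ι → ℝ) (h : Fintype.card ι ≠ 1) :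
    trace₃ (traceFreePart T) = 0 := by
  have : (Fintype.card ι : ℝ) - 1 ≠ 0 := sub_ne_zero.mpr (by exact_mod_cast h)
  funext i
  simp only [traceFreePart, trace₃_add, Pi.add_apply, trace₃_pureTrace, Pi.zero_apply]
  field_simp
  ring

theorem sum_sq_traceFreePart (T : ι → ι → ι → ℝ) (h : Fintype.card ι ≠ 1) :
    ∑ i, ∑ j, ∑ k, traceFreePart T i j k ^ 2
      = ∑ i, ∑ j, ∑ k, T i j k ^ 2
        - ((Fintype.card ι + 1) / ((Fintype.card ι - 1) * (Fintype.card ι + 2))) *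
            (∑ i, trace₁ T i ^ 2 + ∑ i, trace₂ T i ^ 2 + ∑ i, trace₃ T i ^ 2)
        + (2 / ((Fintype.card ι - 1) * (Fintype.card ι + 2))) *
            (∑ i, trace₁ T i * trace₂ T i + ∑ i, trace₁ T i * trace₃ T i
              + ∑ i, trace₂ T i * trace₃ T i) := by
  rw [sum_sq_eq_of_traceless (F := traceFreePart T) rfl (trace₁_traceFreePart T h)
    (trace₂_traceFreePart T h) (trace₃_traceFreePart T h)]
  simp only [mul_sum, ← sum_add_distrib, ← sum_sub_distrib]
  exact sum_congr rfl fun i _ => by ring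

end PureTrace

theorem stmt1 (n : ℕ) (hn : 2 ≤ n) (T : Fin n → Fin n → Fin n → ℝ)
    (T1 T2 T3 : Fin n → ℝ)
    (hT1 : ∀ i, T1 i = ∑ l, T i l l)
    (hT2 : ∀ i, T2 i = ∑ l, T l i l)
    (hT3 : ∀ i, T3 i = ∑ l, T l l i)
    (F : Fin n → Fin n → Fin n → ℝ)
    (hF : ∀ i j k, F i j k = T i j k
      - (((n : ℝ) + 1) / (((n : ℝ) - 1) * ((n : ℝ) + 2))) *
          (T1 i * (if j = k then (1:ℝ) else 0)
           + T2 j * (if i = k then (1:ℝ) else 0)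
           + T3 k * (if i = j then (1:ℝ) else 0))
      + (1 / (((n : ℝ) - 1) * ((n : ℝ) + 2))) *
          (T1 j * (if i = k then (1:ℝ) else 0)
           + T1 k * (if i = j then (1:ℝ) else 0)
           + T2 i * (if j = k then (1:ℝ) else 0)
           + T2 k * (if i = j then (1:ℝ) else 0)
           + T3 i * (if j = k then (1:ℝ) else 0)
           + T3 j * (if i = k then (1:ℝ) else 0))) :
    ∑ i, ∑ j, ∑ k, (F i j k) ^ 2
      = ∑ i, ∑ j, ∑ k, (T i j k) ^ 2
        - (((n : ℝ) + 1) / (((n : ℝ) - 1) * ((n : ℝ) + 2))) *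
            ((∑ i, (T1 i) ^ 2) + (∑ i, (T2 i) ^ 2) + (∑ i, (T3 i) ^ 2))
        + (2 / (((n : ℝ) - 1) * ((n : ℝ) + 2))) *
            ((∑ i, T1 i * T2 i) + (∑ i, T1 i * T3 i) + (∑ i, T2 i * T3 i)) := by
  have hFT : F = traceFreePart T := by
    funext i j k
    simp only [hF, traceFreePart, pureTrace, trace₁, trace₂, trace₃, ← hT1, ← hT2, ← hT3,
      Fintype.card_fin, Pi.add_apply]
    split_ifs <;> ring
  have h₁ : trace₁ T = T1 := funext fun i => (hT1 i).symm
  have h₂ : trace₂ T = T2 := funext fun i => (hT2 i).symm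
  have h₃ : trace₃ T = T3 := funext fun i => (hT3 i).symm
  rw [hFT, sum_sq_traceFreePart T (by rw [Fintype.card_fin]; omega), h₁, h₂, h₃, Fintype.card_fin]
end

section
/- For any third-order tensor T : Fin n → Fin n → Fin n → ℝ with n ≥ 2, the quadratic inequality ∑_{i,j,k} (T i j k)² ≥ ((n+1)/((n-1)(n+2)))(‖T¹‖² + ‖T²‖² + ‖T³‖²) - (2/((n-1)(n+2)))(⟨T¹,T²⟩ + ⟨T¹,T³⟩ + ⟨T²,T³⟩) holds, where T¹, T², T³ are the three partial traces. -/
/-!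
Let `G = deltaTensor a b c` be the tensor `δⱼₖ aᵢ + δᵢₖ bⱼ + δᵢⱼ cₖ`. Pairing any tensor with `G`
only sees its partial traces, `⟨T, G⟩ = ⟨T¹, a⟩ + ⟨T², b⟩ + ⟨T³, c⟩`, and the partial traces of
`G` are `n a + b + c`, `a + n b + c`, `a + b + n c`. For `n ≥ 2` this linear system can be
solved so that `G` has the same partial traces as `T`; then `G` is the orthogonal projection of
`T` onto the tensors of this shape, `‖G‖² = ⟨T, G⟩`, and `0 ≤ ‖T - G‖² = ‖T‖² - ⟨T, G⟩` is the
claimed inequality once `⟨T, G⟩` is written out in terms of the traces.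
-/

namespace Tensor3

variable {ι : Type*} [Fintype ι]

def partialTrace₁ (T : ι → ι → ι → ℝ) (i : ι) : ℝ := ∑ l, T i l l

def partialTrace₂ (T : ι → ι → ι → ℝ) (i : ι) : ℝ := ∑ l, T l i l

def partialTrace₃ (T : ι → ι → ι → ℝ) (i : ι) : ℝ := ∑ l, T l l i

variable [DecidableEq ι]

def deltaTensor (a b c : ι → ℝ) (i j k : ι) : ℝ :=
  (if j = k then a i else 0) + (if i = k then b j else 0) + (if i = j then c k else 0)

theorem sum_mul_deltaTensor (T : ι → ι → ι → ℝ) (a b c : ι → ℝ) :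
    ∑ i, ∑ j, ∑ k, T i j k * deltaTensor a b c i j k
      = ∑ i, (partialTrace₁ T i * a i + partialTrace₂ T i * b i + partialTrace₃ T i * c i) := by
  have h₁ : ∑ i, ∑ j, ∑ k, T i j k * (if j = k then a i else 0) = ∑ i, partialTrace₁ T i * a i := by
    simp [partialTrace₁, Finset.sum_mul]
  have h₂ : ∑ i, ∑ j, ∑ k, T i j k * (if i = k then b j else 0) = ∑ i, partialTrace₂ T i * b i := by
    rw [Finset.sum_comm]
    simp [partialTrace₂, Finset.sum_mul]
  have h₃ : ∑ i, ∑ j, ∑ k, T i j k * (if i = j then c k else 0) = ∑ i, partialTrace₃ T i * c i := by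
    calc _ = ∑ i, ∑ k, T i i k * c k := by simp
      _ = _ := by simp only [partialTrace₃, Finset.sum_mul]; exact Finset.sum_comm
  simp only [deltaTensor, mul_add, Finset.sum_add_distrib, h₁, h₂, h₃]

theorem partialTrace₁_deltaTensor (a b c : ι → ℝ) (i : ι) :
    partialTrace₁ (deltaTensor a b c) i = Fintype.card ι * a i + b i + c i := by
  simp [partialTrace₁, deltaTensor, Finset.sum_add_distrib]

theorem partialTrace₂_deltaTensor (a b c : ι → ℝ) (i : ι) :
    partialTrace₂ (deltaTensor a b c) i = a i + Fintype.card ι * b i + c i := by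
  simp [partialTrace₂, deltaTensor, Finset.sum_add_distrib]

theorem partialTrace₃_deltaTensor (a b c : ι → ℝ) (i : ι) :
    partialTrace₃ (deltaTensor a b c) i = a i + b i + Fintype.card ι * c i := by
  simp [partialTrace₃, deltaTensor, Finset.sum_add_distrib]

theorem sum_partialTrace_mul_le_sum_sq (T : ι → ι → ι → ℝ) (a b c : ι → ℝ)
    (h₁ : partialTrace₁ (deltaTensor a b c) = partialTrace₁ T)
    (h₂ : partialTrace₂ (deltaTensor a b c) = partialTrace₂ T)
    (h₃ : partialTrace₃ (deltaTensor a b c) = partialTrace₃ T) :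
    ∑ i, (partialTrace₁ T i * a i + partialTrace₂ T i * b i + partialTrace₃ T i * c i)
      ≤ ∑ i, ∑ j, ∑ k, T i j k ^ 2 := by
  set G := deltaTensor a b c
  have hGG : ∑ i, ∑ j, ∑ k, G i j k * G i j k = ∑ i, ∑ j, ∑ k, T i j k * G i j k := by
    rw [sum_mul_deltaTensor, sum_mul_deltaTensor, h₁, h₂, h₃]
  have hsq : ∑ i, ∑ j, ∑ k, (T i j k - G i j k) ^ 2
      = ∑ i, ∑ j, ∑ k, T i j k ^ 2 - 2 * ∑ i, ∑ j, ∑ k, T i j k * G i j k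
        + ∑ i, ∑ j, ∑ k, G i j k * G i j k := by
    simp only [Finset.mul_sum, ← Finset.sum_sub_distrib, ← Finset.sum_add_distrib]
    exact Finset.sum_congr rfl fun i _ => Finset.sum_congr rfl fun j _ =>
      Finset.sum_congr rfl fun k _ => by ring
  have hnonneg : 0 ≤ ∑ i, ∑ j, ∑ k, (T i j k - G i j k) ^ 2 := by positivity
  rw [← sum_mul_deltaTensor]
  linarith

end Tensor3

theorem stmt3 (n : ℕ) (hn : 2 ≤ n) (T : Fin n → Fin n → Fin n → ℝ)
    (T1 T2 T3 : Fin n → ℝ)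
    (hT1 : ∀ i, T1 i = ∑ l, T i l l)
    (hT2 : ∀ i, T2 i = ∑ l, T l i l)
    (hT3 : ∀ i, T3 i = ∑ l, T l l i) :
    ∑ i, ∑ j, ∑ k, (T i j k) ^ 2
      ≥ (((n : ℝ) + 1) / (((n : ℝ) - 1) * ((n : ℝ) + 2))) *
          ((∑ i, (T1 i) ^ 2) + (∑ i, (T2 i) ^ 2) + (∑ i, (T3 i) ^ 2))
        - (2 / (((n : ℝ) - 1) * ((n : ℝ) + 2))) *
            ((∑ i, T1 i * T2 i) + (∑ i, T1 i * T3 i) + (∑ i, T2 i * T3 i)) := by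
  have h₁ : Tensor3.partialTrace₁ T = T1 := funext fun i => (hT1 i).symm
  have h₂ : Tensor3.partialTrace₂ T = T2 := funext fun i => (hT2 i).symm
  have h₃ : Tensor3.partialTrace₃ T = T3 := funext fun i => (hT3 i).symm
  have hn' : (2 : ℝ) ≤ n := by exact_mod_cast hn
  have hD : ((n : ℝ) - 1) * ((n : ℝ) + 2) ≠ 0 := by nlinarith
  set D := ((n : ℝ) - 1) * ((n : ℝ) + 2)
  -- `((n - 1) I + J)⁻¹ = ((n + 2) I - J) / ((n - 1) (n + 2))`, `J` the all-ones `3 × 3` matrix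
  let a i := ((n + 1) * T1 i - T2 i - T3 i) / D
  let b i := ((n + 1) * T2 i - T1 i - T3 i) / D
  let c i := ((n + 1) * T3 i - T1 i - T2 i) / D
  have key := Tensor3.sum_partialTrace_mul_le_sum_sq T a b c
    (funext fun i => by
      rw [Tensor3.partialTrace₁_deltaTensor, h₁, Fintype.card_fin]
      simp only [a, b, c]; field_simp; ring)
    (funext fun i => by
      rw [Tensor3.partialTrace₂_deltaTensor, h₂, Fintype.card_fin]
      simp only [a, b, c]; field_simp; ring)
    (funext fun i => by
      rw [Tensor3.partialTrace₃_deltaTensor, h₃, Fintype.card_fin]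
      simp only [a, b, c]; field_simp; ring)
  rw [h₁, h₂, h₃] at key
  refine le_of_eq_of_le ?_ key
  simp only [Finset.mul_sum, ← Finset.sum_add_distrib, ← Finset.sum_sub_distrib]
  refine Finset.sum_congr rfl fun i _ => ?_
  simp only [a, b, c]
  field_simp
  ring
end

section
/- Let T : Fin n → Fin n → Fin n → ℝ be a third-order tensor whose first partial trace vanishes and whose second and third traces are opposite: T¹ = 0 and T³ = -T². Then the trace-free minimal norm tensor of T equals F i j k = T i j k - (1/(n-1))(T²ⱼ δᵢₖ - T²ₖ δᵢⱼ) (assuming n ≥ 2), i.e. the general formula of Theorem 1.1 simplifies to this expression under these hypotheses. -/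
-- Also true at `x = 1`, where both sides are `0` because `a / 0 = 0`.
lemma div_add_one_div_mul_add_two {x : ℝ} (hx : x + 2 ≠ 0) :
    (x + 1) / ((x - 1) * (x + 2)) + 1 / ((x - 1) * (x + 2)) = 1 / (x - 1) := by
  rw [← add_div, mul_comm, ← div_div, show x + 1 + 1 = x + 2 by ring, div_self hx]

theorem stmt4_general (n : ℕ) (T : Fin n → Fin n → Fin n → ℝ)
    (T1 T2 T3 : Fin n → ℝ)
    (h1 : ∀ i, T1 i = 0)
    (h3 : ∀ i, T3 i = - T2 i) :
    ∀ i j k,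
      (T i j k
        - (((n : ℝ) + 1) / (((n : ℝ) - 1) * ((n : ℝ) + 2))) *
            (T1 i * (if j = k then (1:ℝ) else 0)
             + T2 j * (if i = k then (1:ℝ) else 0)
             + T3 k * (if i = j then (1:ℝ) else 0))
        + (1 / (((n : ℝ) - 1) * ((n : ℝ) + 2))) *
            (T1 j * (if i = k then (1:ℝ) else 0)
             + T1 k * (if i = j then (1:ℝ) else 0)
             + T2 i * (if j = k then (1:ℝ) else 0)
             + T2 k * (if i = j then (1:ℝ) else 0)
             + T3 i * (if j = k then (1:ℝ) else 0)
             + T3 j * (if i = k then (1:ℝ) else 0)))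
      = T i j k
        - (1 / ((n : ℝ) - 1)) *
            (T2 j * (if i = k then (1:ℝ) else 0)
             - T2 k * (if i = j then (1:ℝ) else 0)) := by
  intro i j k
  have hcoeff := div_add_one_div_mul_add_two (x := (n : ℝ)) (by positivity)
  -- Once `T1 = 0` and `T3 = -T2`, both brackets are `∓ (T2 j δᵢₖ - T2 k δᵢⱼ)`.
  simp only [h1, h3]
  linear_combination
    -(T2 j * (if i = k then (1:ℝ) else 0) - T2 k * (if i = j then (1:ℝ) else 0)) * hcoeff

theorem stmt4 (n : ℕ) (hn : 2 ≤ n) (T : Fin n → Fin n → Fin n → ℝ)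
    (T1 T2 T3 : Fin n → ℝ)
    (hT1 : ∀ i, T1 i = ∑ l, T i l l)
    (hT2 : ∀ i, T2 i = ∑ l, T l i l)
    (hT3 : ∀ i, T3 i = ∑ l, T l l i)
    (h1 : ∀ i, T1 i = 0)
    (h3 : ∀ i, T3 i = - T2 i) :
    ∀ i j k,
      (T i j k
        - (((n : ℝ) + 1) / (((n : ℝ) - 1) * ((n : ℝ) + 2))) *
            (T1 i * (if j = k then (1:ℝ) else 0)
             + T2 j * (if i = k then (1:ℝ) else 0)
             + T3 k * (if i = j then (1:ℝ) else 0))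
        + (1 / (((n : ℝ) - 1) * ((n : ℝ) + 2))) *
            (T1 j * (if i = k then (1:ℝ) else 0)
             + T1 k * (if i = j then (1:ℝ) else 0)
             + T2 i * (if j = k then (1:ℝ) else 0)
             + T2 k * (if i = j then (1:ℝ) else 0)
             + T3 i * (if j = k then (1:ℝ) else 0)
             + T3 j * (if i = k then (1:ℝ) else 0)))
      = T i j k
        - (1 / ((n : ℝ) - 1)) *
            (T2 j * (if i = k then (1:ℝ) else 0)
             - T2 k * (if i = j then (1:ℝ) else 0)) :=
  stmt4_general n T T1 T2 T3 h1 h3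
end

section
/- Let T : Fin n → Fin n → Fin n → Fin n → ℝ be totally symmetric with n ≥ 3, with trace Tᵢⱼ = ∑ₗ T i j l l and double trace Tₛ, and let F be the trace-free part F i j k l = T i j k l - (1/(n+4))(Tᵢⱼ δₖₗ + Tᵢₖ δⱼₗ + Tᵢₗ δⱼₖ + Tⱼₖ δᵢₗ + Tⱼₗ δᵢₖ + Tₖₗ δᵢⱼ) + (Tₛ/((n+4)(n+2)))(δᵢⱼ δₖₗ + δᵢₖ δⱼₗ + δᵢₗ δⱼₖ). Then ∑_{i,j,k,l} (F i j k l)² = ∑_{i,j,k,l} (T i j k l)² - (6/(n+4)) ∑_{i,j} (Tᵢⱼ)² + 3 Tₛ²/((n+4)(n+2)). -/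
/-!
The correction `P := T - F` is a combination of `Sym(T₂ ⊗ δ)` and `Sym(δ ⊗ δ)`. Pairing a totally
symmetric tensor `G` with `Sym(c ⊗ δ)` gives six copies of `⟨tr G, c⟩`, and with `Sym(δ ⊗ δ)` three
copies of the double trace of `G`. Since `F` is totally symmetric and trace-free, it is therefore
orthogonal to `P`, so `|F|² = ⟨F, T⟩ = |T|² - ⟨T, P⟩`, and the two pairings above evaluate
`⟨T, P⟩` as `6 |T₂|² / (n + 4) - 3 Tₛ² / ((n + 4) (n + 2))`.
-/

open Finset

namespace SymTensor4

variable {ι R : Type*}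

section CommRing

variable [CommRing R]

structure IsSymm (G : ι → ι → ι → ι → R) : Prop where
  swap12 : ∀ i j k l, G i j k l = G j i k l
  swap23 : ∀ i j k l, G i j k l = G i k j l
  swap34 : ∀ i j k l, G i j k l = G i j l k

lemma IsSymm.sub_mul_add_mul {A B C : ι → ι → ι → ι → R} (hA : IsSymm A) (hB : IsSymm B)
    (hC : IsSymm C) (a b : R) :
    IsSymm fun i j k l => A i j k l - a * B i j k l + b * C i j k l where
  swap12 i j k l := by rw [hA.swap12, hB.swap12, hC.swap12]
  swap23 i j k l := by rw [hA.swap23, hB.swap23, hC.swap23]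
  swap34 i j k l := by rw [hA.swap34, hB.swap34, hC.swap34]

section DecidableEq

variable [DecidableEq ι]

def symDelta (c : ι → ι → R) (i j k l : ι) : R :=
  c i j * (if k = l then 1 else 0) + c i k * (if j = l then 1 else 0)
    + c i l * (if j = k then 1 else 0) + c j k * (if i = l then 1 else 0)
    + c j l * (if i = k then 1 else 0) + c k l * (if i = j then 1 else 0)

def deltaDelta (i j k l : ι) : R :=
  (if i = j then 1 else 0) * (if k = l then 1 else 0)
    + (if i = k then 1 else 0) * (if j = l then 1 else 0)
    + (if i = l then 1 else 0) * (if j = k then 1 else 0)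

lemma isSymm_symDelta {c : ι → ι → R} (hc : ∀ i j, c i j = c j i) : IsSymm (symDelta c) where
  swap12 i j k l := by simp only [symDelta, hc j i, @eq_comm _ j i]; ring
  swap23 i j k l := by simp only [symDelta, hc k j, @eq_comm _ k j]; ring
  swap34 i j k l := by simp only [symDelta, hc l k, @eq_comm _ l k]; ring

lemma isSymm_deltaDelta : IsSymm (deltaDelta : ι → ι → ι → ι → R) where
  swap12 i j k l := by simp only [deltaDelta, @eq_comm _ j i]; ring
  swap23 i j k l := by simp only [deltaDelta, @eq_comm _ k j]; ring
  swap34 i j k l := by simp only [deltaDelta, @eq_comm _ l k]; ring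

end DecidableEq

variable [Fintype ι]

def trace (G : ι → ι → ι → ι → R) (i j : ι) : R := ∑ l, G i j l l

def dot (G H : ι → ι → ι → ι → R) : R := ∑ i, ∑ j, ∑ k, ∑ l, G i j k l * H i j k l

lemma IsSymm.trace_comm {G : ι → ι → ι → ι → R} (hG : IsSymm G) (i j : ι) :
    trace G i j = trace G j i :=
  sum_congr rfl fun l _ => hG.swap12 i j l l

lemma trace_sub_mul_add_mul (A B C : ι → ι → ι → ι → R) (a b : R) (i j : ι) :
    trace (fun i j k l => A i j k l - a * B i j k l + b * C i j k l) i j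
      = trace A i j - a * trace B i j + b * trace C i j := by
  simp only [trace, sum_add_distrib, sum_sub_distrib, mul_sum]

lemma dot_comm (G H : ι → ι → ι → ι → R) : dot G H = dot H G := by
  simp only [dot, mul_comm]

lemma dot_sub_mul_add_mul (G A B C : ι → ι → ι → ι → R) (a b : R) :
    dot G (fun i j k l => A i j k l - a * B i j k l + b * C i j k l)
      = dot G A - a * dot G B + b * dot G C := by
  simp only [dot, mul_add, mul_sub, sum_add_distrib, sum_sub_distrib, mul_sum, mul_left_comm]

variable [DecidableEq ι]

lemma trace_symDelta {c : ι → ι → R} (hc : ∀ i j, c i j = c j i) (i j : ι) :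
    trace (symDelta c) i j
      = (Fintype.card ι + 4) * c i j + (∑ l, c l l) * (if i = j then 1 else 0) := by
  simp only [trace, symDelta, sum_add_distrib, mul_ite, mul_one, mul_zero, sum_ite_eq,
    mem_univ, if_true, sum_const, card_univ, nsmul_eq_mul, sum_ite_irrel, hc j i]
  ring

lemma trace_deltaDelta (i j : ι) :
    trace (deltaDelta : ι → ι → ι → ι → R) i j
      = (Fintype.card ι + 2) * (if i = j then 1 else 0) := by
  simp only [trace, deltaDelta, sum_add_distrib, mul_ite, mul_one, mul_zero, sum_ite_eq,
    mem_univ, if_true, sum_const, card_univ, nsmul_eq_mul]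
  split_ifs <;> ring

lemma dot_symDelta {G : ι → ι → ι → ι → R} (hG : IsSymm G) (c : ι → ι → R) :
    dot G (symDelta c) = 6 * ∑ i, ∑ j, trace G i j * c i j := by
  have h1 : ∑ i, ∑ j, ∑ k, ∑ l, G i j k l * (c i j * (if k = l then 1 else 0))
      = ∑ i, ∑ j, trace G i j * c i j := by
    simp only [mul_ite, mul_one, mul_zero, sum_ite_eq, mem_univ, if_true, trace, sum_mul]
  have h2 : ∑ i, ∑ j, ∑ k, ∑ l, G i j k l * (c i k * (if j = l then 1 else 0))
      = ∑ i, ∑ j, trace G i j * c i j := by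
    simp only [mul_ite, mul_one, mul_zero, sum_ite_eq, mem_univ, if_true, trace, sum_mul]
    refine sum_congr rfl fun i _ => ?_
    rw [sum_comm]
    exact sum_congr rfl fun k _ => sum_congr rfl fun j _ => by rw [hG.swap23]
  have h3 : ∑ i, ∑ j, ∑ k, ∑ l, G i j k l * (c i l * (if j = k then 1 else 0))
      = ∑ i, ∑ j, trace G i j * c i j := by
    simp only [mul_ite, mul_one, mul_zero, sum_ite_irrel, sum_const_zero, sum_ite_eq, mem_univ,
      if_true, trace, sum_mul]
    refine sum_congr rfl fun i _ => ?_
    rw [sum_comm]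
    exact sum_congr rfl fun l _ => sum_congr rfl fun j _ => by rw [hG.swap34, hG.swap23]
  have h4 : ∑ i, ∑ j, ∑ k, ∑ l, G i j k l * (c j k * (if i = l then 1 else 0))
      = ∑ i, ∑ j, trace G i j * c i j := by
    simp only [mul_ite, mul_one, mul_zero, sum_ite_eq, mem_univ, if_true, trace, sum_mul]
    rw [← sum_comm_cycle]
    exact sum_congr rfl fun j _ => sum_congr rfl fun k _ => sum_congr rfl fun i _ => by
      rw [hG.swap12, hG.swap23]
  have h5 : ∑ i, ∑ j, ∑ k, ∑ l, G i j k l * (c j l * (if i = k then 1 else 0))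
      = ∑ i, ∑ j, trace G i j * c i j := by
    simp only [mul_ite, mul_one, mul_zero, sum_ite_irrel, sum_const_zero, sum_ite_eq, mem_univ,
      if_true, trace, sum_mul]
    rw [← sum_comm_cycle]
    exact sum_congr rfl fun j _ => sum_congr rfl fun l _ => sum_congr rfl fun i _ => by
      rw [hG.swap12, hG.swap34, hG.swap23]
  have h6 : ∑ i, ∑ j, ∑ k, ∑ l, G i j k l * (c k l * (if i = j then 1 else 0))
      = ∑ i, ∑ j, trace G i j * c i j := by
    simp only [mul_ite, mul_one, mul_zero, sum_ite_irrel, sum_const_zero, sum_ite_eq, mem_univ,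
      if_true, trace, sum_mul]
    rw [← sum_comm_cycle]
    exact sum_congr rfl fun k _ => sum_congr rfl fun l _ => sum_congr rfl fun i _ => by
      rw [hG.swap23, hG.swap12, hG.swap34, hG.swap23]
  simp only [dot, symDelta, mul_add, sum_add_distrib, h1, h2, h3, h4, h5, h6]
  ring

lemma dot_deltaDelta {G : ι → ι → ι → ι → R} (hG : IsSymm G) :
    dot G deltaDelta = 3 * ∑ i, trace G i i := by
  have h2 (i j : ι) : G i j i j = G i i j j := hG.swap23 i j i j
  have h3 (i j : ι) : G i j j i = G i i j j := (hG.swap34 i j j i).trans (h2 i j)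
  simp only [dot, deltaDelta, mul_add, sum_add_distrib, mul_ite, mul_one, mul_zero, sum_ite_irrel,
    sum_const_zero, sum_ite_eq, mem_univ, if_true, trace, h2, h3]
  ring

end CommRing

section Field

variable [Field R] [Fintype ι] [DecidableEq ι]

def traceFree (T : ι → ι → ι → ι → R) : ι → ι → ι → ι → R := fun i j k l =>
  T i j k l - 1 / (Fintype.card ι + 4) * symDelta (trace T) i j k l
    + (∑ m, trace T m m) / ((Fintype.card ι + 4) * (Fintype.card ι + 2)) * deltaDelta i j k l

lemma IsSymm.traceFree {T : ι → ι → ι → ι → R} (hT : IsSymm T) : IsSymm (traceFree T) :=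
  hT.sub_mul_add_mul (isSymm_symDelta hT.trace_comm) isSymm_deltaDelta _ _

variable [CharZero R]

lemma trace_traceFree {T : ι → ι → ι → ι → R} (hT : IsSymm T) (i j : ι) :
    trace (traceFree T) i j = 0 := by
  have h4 : (Fintype.card ι : R) + 4 ≠ 0 := by norm_cast
  have h2 : (Fintype.card ι : R) + 2 ≠ 0 := by norm_cast
  unfold traceFree
  rw [trace_sub_mul_add_mul, trace_symDelta hT.trace_comm, trace_deltaDelta]
  field_simp
  ring

lemma dot_traceFree_self {T : ι → ι → ι → ι → R} (hT : IsSymm T) :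
    dot (traceFree T) (traceFree T)
      = dot T T - 6 / (Fintype.card ι + 4) * ∑ i, ∑ j, trace T i j ^ 2
        + 3 * (∑ m, trace T m m) ^ 2 / ((Fintype.card ι + 4) * (Fintype.card ι + 2)) := by
  have hF := hT.traceFree
  have hF0 : ∀ i j, trace (traceFree T) i j = 0 := trace_traceFree hT
  calc dot (traceFree T) (traceFree T)
        = dot (traceFree T) T - 1 / (Fintype.card ι + 4) * dot (traceFree T) (symDelta (trace T))
          + (∑ m, trace T m m) / ((Fintype.card ι + 4) * (Fintype.card ι + 2))
            * dot (traceFree T) deltaDelta := dot_sub_mul_add_mul _ _ _ _ _ _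
    _ = dot (traceFree T) T := by
        rw [dot_symDelta hF, dot_deltaDelta hF]
        simp only [hF0, zero_mul, sum_const_zero, mul_zero, sub_zero, add_zero]
    _ = dot T (traceFree T) := dot_comm _ _
    _ = _ := by
        unfold traceFree
        rw [dot_sub_mul_add_mul, dot_symDelta hT, dot_deltaDelta hT]
        simp only [sq]
        ring

end Field

end SymTensor4

open SymTensor4

theorem stmt8_general (n : ℕ) (T : Fin n → Fin n → Fin n → Fin n → ℝ)
    (hsym12 : ∀ i j k l, T i j k l = T j i k l)
    (hsym23 : ∀ i j k l, T i j k l = T i k j l)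
    (hsym34 : ∀ i j k l, T i j k l = T i j l k)
    (T2 : Fin n → Fin n → ℝ) (hT2 : ∀ i j, T2 i j = ∑ l, T i j l l)
    (Ts : ℝ) (hTs : Ts = ∑ k, ∑ l, T k k l l)
    (F : Fin n → Fin n → Fin n → Fin n → ℝ)
    (hF : ∀ i j k l, F i j k l = T i j k l
      - (1 / ((n : ℝ) + 4)) *
          (T2 i j * (if k = l then (1:ℝ) else 0)
           + T2 i k * (if j = l then (1:ℝ) else 0)
           + T2 i l * (if j = k then (1:ℝ) else 0)
           + T2 j k * (if i = l then (1:ℝ) else 0)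
           + T2 j l * (if i = k then (1:ℝ) else 0)
           + T2 k l * (if i = j then (1:ℝ) else 0))
      + (Ts / (((n : ℝ) + 4) * ((n : ℝ) + 2))) *
          ((if i = j then (1:ℝ) else 0) * (if k = l then (1:ℝ) else 0)
           + (if i = k then (1:ℝ) else 0) * (if j = l then (1:ℝ) else 0)
           + (if i = l then (1:ℝ) else 0) * (if j = k then (1:ℝ) else 0))) :
    ∑ i, ∑ j, ∑ k, ∑ l, (F i j k l) ^ 2
      = ∑ i, ∑ j, ∑ k, ∑ l, (T i j k l) ^ 2
        - (6 / ((n : ℝ) + 4)) * ∑ i, ∑ j, (T2 i j) ^ 2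
        + 3 * Ts ^ 2 / (((n : ℝ) + 4) * ((n : ℝ) + 2)) := by
  obtain rfl : T2 = trace T := funext₂ hT2
  obtain rfl : Ts = ∑ m, trace T m m := hTs
  obtain rfl : F = traceFree T := by
    funext i j k l
    rw [hF, traceFree, Fintype.card_fin]
    rfl
  simpa only [dot, Fintype.card_fin, ← sq] using dot_traceFree_self ⟨hsym12, hsym23, hsym34⟩

theorem stmt8 (n : ℕ) (hn : 3 ≤ n) (T : Fin n → Fin n → Fin n → Fin n → ℝ)
    (hsym12 : ∀ i j k l, T i j k l = T j i k l)
    (hsym23 : ∀ i j k l, T i j k l = T i k j l)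
    (hsym34 : ∀ i j k l, T i j k l = T i j l k)
    (T2 : Fin n → Fin n → ℝ) (hT2 : ∀ i j, T2 i j = ∑ l, T i j l l)
    (Ts : ℝ) (hTs : Ts = ∑ k, ∑ l, T k k l l)
    (F : Fin n → Fin n → Fin n → Fin n → ℝ)
    (hF : ∀ i j k l, F i j k l = T i j k l
      - (1 / ((n : ℝ) + 4)) *
          (T2 i j * (if k = l then (1:ℝ) else 0)
           + T2 i k * (if j = l then (1:ℝ) else 0)
           + T2 i l * (if j = k then (1:ℝ) else 0)
           + T2 j k * (if i = l then (1:ℝ) else 0)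
           + T2 j l * (if i = k then (1:ℝ) else 0)
           + T2 k l * (if i = j then (1:ℝ) else 0))
      + (Ts / (((n : ℝ) + 4) * ((n : ℝ) + 2))) *
          ((if i = j then (1:ℝ) else 0) * (if k = l then (1:ℝ) else 0)
           + (if i = k then (1:ℝ) else 0) * (if j = l then (1:ℝ) else 0)
           + (if i = l then (1:ℝ) else 0) * (if j = k then (1:ℝ) else 0))) :
    ∑ i, ∑ j, ∑ k, ∑ l, (F i j k l) ^ 2
      = ∑ i, ∑ j, ∑ k, ∑ l, (T i j k l) ^ 2
        - (6 / ((n : ℝ) + 4)) * ∑ i, ∑ j, (T2 i j) ^ 2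
        + 3 * Ts ^ 2 / (((n : ℝ) + 4) * ((n : ℝ) + 2)) :=
  stmt8_general n T hsym12 hsym23 hsym34 T2 hT2 Ts hTs F hF
end

section
/- For any totally symmetric fourth-order tensor T on ℝ^n with n ≥ 3, the inequality ∑_{i,j,k,l} (T i j k l)² ≥ (6/(n+4)) ∑_{i,j} (Tᵢⱼ)² - 3 Tₛ²/((n+4)(n+2)) holds, where Tᵢⱼ = ∑ₗ T i j l l and Tₛ = ∑_{k,l} T k k l l. -/
/-!
With `δ` the Kronecker delta, `c = 1 / (n + 4)`, `s = Ts / (2 (n + 2))` and `B = T2 - s δ`, the tensor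
`c · symmDelta B` is the trace part of `T`, and the inequality is `‖T - c · symmDelta B‖² ≥ 0` expanded.
The expansion needs `⟨T, symmDelta B⟩ = 6 ⟨T2, B⟩` for totally symmetric `T`; since `symmDelta B` is
itself totally symmetric, with contraction `(n + 4) B + (tr B) δ`, the same identity gives
`‖symmDelta B‖² = 6 (n + 4) ‖B‖² + 6 (tr B)²`.
-/

open Finset

lemma two_mul_sum_mul_sub_le_sum_sq {ι : Type*} [Fintype ι] (T U : ι → ι → ι → ι → ℝ) (c : ℝ) :
    2 * c * ∑ i, ∑ j, ∑ k, ∑ l, T i j k l * U i j k l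
        - c ^ 2 * ∑ i, ∑ j, ∑ k, ∑ l, U i j k l ^ 2
      ≤ ∑ i, ∑ j, ∑ k, ∑ l, T i j k l ^ 2 := by
  have expand : ∀ i j k l, (T i j k l - c * U i j k l) ^ 2
      = T i j k l ^ 2 - 2 * c * (T i j k l * U i j k l) + c ^ 2 * U i j k l ^ 2 :=
    fun _ _ _ _ => by ring
  have h : 0 ≤ ∑ i, ∑ j, ∑ k, ∑ l, (T i j k l - c * U i j k l) ^ 2 := by positivity
  simp only [expand, sum_add_distrib, sum_sub_distrib, ← mul_sum] at h
  linarith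

section

variable {ι : Type*} [DecidableEq ι]

def symmDelta (B : ι → ι → ℝ) (i j k l : ι) : ℝ :=
  (if i = j then 1 else 0) * B k l + (if i = k then 1 else 0) * B j l
    + (if i = l then 1 else 0) * B j k + (if j = k then 1 else 0) * B i l
    + (if j = l then 1 else 0) * B i k + (if k = l then 1 else 0) * B i j

variable {B : ι → ι → ℝ}

lemma symmDelta_swap₁₂ (hB : ∀ i j, B i j = B j i) (i j k l : ι) :
    symmDelta B i j k l = symmDelta B j i k l := by
  simp only [symmDelta, eq_comm (a := i) (b := j), hB i j]; ring

lemma symmDelta_swap₂₃ (hB : ∀ i j, B i j = B j i) (i j k l : ι) :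
    symmDelta B i j k l = symmDelta B i k j l := by
  simp only [symmDelta, eq_comm (a := j) (b := k), hB j k]; ring

lemma symmDelta_swap₃₄ (hB : ∀ i j, B i j = B j i) (i j k l : ι) :
    symmDelta B i j k l = symmDelta B i j l k := by
  simp only [symmDelta, eq_comm (a := k) (b := l), hB k l]; ring

variable [Fintype ι]

lemma sum_symmDelta_diag (hB : ∀ i j, B i j = B j i) (i j : ι) :
    ∑ l, symmDelta B i j l l
      = (Fintype.card ι + 4) * B i j + (if i = j then 1 else 0) * ∑ l, B l l := by
  simp only [symmDelta, sum_add_distrib, ite_mul, one_mul, zero_mul, sum_ite_eq, sum_ite_irrel,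
    sum_const_zero, mem_univ, if_true, sum_const, card_univ, nsmul_eq_mul, hB j i]
  ring

lemma sum_mul_symmDelta {T : ι → ι → ι → ι → ℝ}
    (h12 : ∀ i j k l, T i j k l = T j i k l)
    (h23 : ∀ i j k l, T i j k l = T i k j l)
    (h34 : ∀ i j k l, T i j k l = T i j l k) (B : ι → ι → ℝ) :
    ∑ i, ∑ j, ∑ k, ∑ l, T i j k l * symmDelta B i j k l
      = 6 * ∑ i, ∑ j, (∑ l, T i j l l) * B i j := by
  -- Naming the contraction keeps `simp` from treating `c1`–`c5` as permutation lemmas.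
  obtain ⟨C, hC⟩ : ∃ C : ι → ι → ι → ℝ, ∀ a b x, T a b x x = C a b x := ⟨_, fun _ _ _ => rfl⟩
  have c1 : ∀ x a b, T x x a b = C a b x := fun x a b => by rw [h23, h12, h34, h23, hC]
  have c2 : ∀ x a b, T x a x b = C a b x := fun x a b => by rw [← h23, c1]
  have c3 : ∀ x a b, T x a b x = C a b x := fun x a b => by rw [h34, c2]
  have c4 : ∀ a x b, T a x x b = C a b x := fun a x b => by rw [h34, h23, hC]
  have c5 : ∀ a x b, T a x b x = C a b x := fun a x b => by rw [h23, hC]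
  have outer : ∑ x, ∑ a, ∑ b, C a b x * B a b = ∑ a, ∑ b, ∑ x, C a b x * B a b := by
    rw [sum_comm]; exact sum_congr rfl fun _ _ => sum_comm
  have inner : ∑ a, ∑ x, ∑ b, C a b x * B a b = ∑ a, ∑ b, ∑ x, C a b x * B a b :=
    sum_congr rfl fun _ _ => sum_comm
  simp only [symmDelta, mul_add, sum_add_distrib, mul_ite, mul_zero, ite_mul, zero_mul,
    sum_ite_irrel, sum_const_zero, sum_ite_eq, mem_univ, if_true, one_mul, sum_mul,
    hC, c1, c2, c3, c4, c5, outer, inner]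
  ring

lemma sum_symmDelta_sq (hB : ∀ i j, B i j = B j i) :
    ∑ i, ∑ j, ∑ k, ∑ l, symmDelta B i j k l ^ 2
      = 6 * (Fintype.card ι + 4) * ∑ i, ∑ j, B i j ^ 2 + 6 * (∑ i, B i i) ^ 2 := by
  simp only [sq, sum_mul_symmDelta (symmDelta_swap₁₂ hB) (symmDelta_swap₂₃ hB)
    (symmDelta_swap₃₄ hB), sum_symmDelta_diag hB, add_mul, sum_add_distrib, ite_mul, one_mul,
    zero_mul, sum_ite_eq, mem_univ, if_true, mul_assoc, ← mul_sum]
  ring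

lemma sum_mul_sub_delta (A : ι → ι → ℝ) (s : ℝ) :
    ∑ i, ∑ j, A i j * (A i j - s * if i = j then 1 else 0)
      = ∑ i, ∑ j, A i j ^ 2 - s * ∑ i, A i i := by
  simp only [mul_sub, mul_ite, mul_one, mul_zero, sum_sub_distrib, sum_ite_eq, mem_univ, if_true,
    ← sum_mul, sq]
  ring

lemma sum_sub_delta_sq (A : ι → ι → ℝ) (s : ℝ) :
    ∑ i, ∑ j, (A i j - s * if i = j then 1 else 0) ^ 2
      = ∑ i, ∑ j, A i j ^ 2 - 2 * s * ∑ i, A i i + Fintype.card ι * s ^ 2 := by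
  have expand : ∀ i j, (A i j - s * if i = j then 1 else 0) ^ 2
      = A i j ^ 2 - 2 * s * (if i = j then A i j else 0) + s ^ 2 * (if i = j then 1 else 0) :=
    fun i j => by split_ifs <;> ring
  simp only [expand, sum_add_distrib, sum_sub_distrib, ← mul_sum, sum_ite_eq, mem_univ, if_true,
    sum_const, card_univ, nsmul_eq_mul]
  ring

end

theorem stmt9_general (n : ℕ) (T : Fin n → Fin n → Fin n → Fin n → ℝ)
    (hsym12 : ∀ i j k l, T i j k l = T j i k l)
    (hsym23 : ∀ i j k l, T i j k l = T i k j l)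
    (hsym34 : ∀ i j k l, T i j k l = T i j l k)
    (T2 : Fin n → Fin n → ℝ) (hT2 : ∀ i j, T2 i j = ∑ l, T i j l l)
    (Ts : ℝ) (hTs : Ts = ∑ k, ∑ l, T k k l l) :
    ∑ i, ∑ j, ∑ k, ∑ l, (T i j k l) ^ 2
      ≥ (6 / ((n : ℝ) + 4)) * ∑ i, ∑ j, (T2 i j) ^ 2
        - 3 * Ts ^ 2 / (((n : ℝ) + 4) * ((n : ℝ) + 2)) := by
  have htrace : ∑ i, T2 i i = Ts := by simp only [hTs, hT2]
  set s : ℝ := Ts / (2 * ((n : ℝ) + 2)) with hs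
  have hB : ∀ i j : Fin n, T2 i j - s * (if i = j then 1 else 0)
      = T2 j i - s * (if j = i then 1 else 0) := fun i j => by
    simp only [hT2, hsym12 i j, eq_comm (a := i)]
  have key := two_mul_sum_mul_sub_le_sum_sq T
    (symmDelta fun i j => T2 i j - s * if i = j then 1 else 0) (1 / ((n : ℝ) + 4))
  rw [sum_mul_symmDelta hsym12 hsym23 hsym34, sum_symmDelta_sq hB] at key
  simp only [← hT2, sum_mul_sub_delta, sum_sub_delta_sq] at key
  simp only [if_true, mul_one, sum_sub_distrib, sum_const, card_univ, nsmul_eq_mul, htrace,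
    Fintype.card_fin] at key
  convert key using 1
  rw [hs]
  field_simp
  ring

theorem stmt9 (n : ℕ) (hn : 3 ≤ n) (T : Fin n → Fin n → Fin n → Fin n → ℝ)
    (hsym12 : ∀ i j k l, T i j k l = T j i k l)
    (hsym23 : ∀ i j k l, T i j k l = T i k j l)
    (hsym34 : ∀ i j k l, T i j k l = T i j l k)
    (T2 : Fin n → Fin n → ℝ) (hT2 : ∀ i j, T2 i j = ∑ l, T i j l l)
    (Ts : ℝ) (hTs : Ts = ∑ k, ∑ l, T k k l l) :
    ∑ i, ∑ j, ∑ k, ∑ l, (T i j k l) ^ 2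
      ≥ (6 / ((n : ℝ) + 4)) * ∑ i, ∑ j, (T2 i j) ^ 2
        - 3 * Ts ^ 2 / (((n : ℝ) + 4) * ((n : ℝ) + 2)) :=
  stmt9_general n T hsym12 hsym23 hsym34 T2 hT2 Ts hTs
end

section
/- Let T : Fin n → Fin n → Fin n → ℝ with n ≥ 2 and let F be the function on ℝ⁹ given by F(x₁,x₂,x₃,y₁,y₂,y₃,z₁,z₂,z₃) = ∑_{i,j,k} (T i j k + x₁ T¹ᵢ δⱼₖ + x₂ T¹ⱼ δᵢₖ + x₃ T¹ₖ δᵢⱼ + y₁ T²ᵢ δⱼₖ + y₂ T²ⱼ δᵢₖ + y₃ T²ₖ δᵢⱼ + z₁ T³ᵢ δⱼₖ + z₂ T³ⱼ δᵢₖ + z₃ T³ₖ δᵢⱼ)². Then F attains its global minimum at the point x₁ = y₂ = z₃ = -(n+1)/((n-1)(n+2)) and x₂ = x₃ = y₁ = y₃ = z₁ = z₂ = 1/((n-1)(n+2)), provided the Gram matrix of (T¹, T², T³) is invertible; moreover at this point F is the unique critical point of the (convex quadratic) function F. -/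
/-!
Writing `U = x₁ T¹ + y₁ T² + z₁ T³`, `V = x₂ T¹ + …`, `W = x₃ T¹ + …`, the function is
`‖T + U ⊗ δ + V ⊗ δ + W ⊗ δ‖²`, a quadratic in `(U, V, W) ∈ (ℝⁿ)³` whose quadratic part
`∑ᵢ (Uᵢ + Vᵢ + Wᵢ)² + (n - 1)(Uᵢ² + Vᵢ² + Wᵢ²)` is positive definite for `n ≥ 2`. Its critical
point over all of `(ℝⁿ)³` (where `T + U ⊗ δ + V ⊗ δ + W ⊗ δ` becomes traceless) is
`U = a T¹ + b T² + b T³`, `V = b T¹ + a T² + b T³`, `W = b T¹ + b T² + a T³`; it lies in the span of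
the traces, so it is the minimum, and the value at any other point exceeds it by the quadratic part
of the displacement. Invertibility of the Gram matrix makes `T¹, T², T³` linearly independent,
so the coefficients are determined by `(U, V, W)`.
-/

open Finset

theorem LinearIndependent.eq_of_fin_three_smul_add_eq {R M : Type*} [Ring R] [AddCommGroup M]
    [Module R M] {u v w : M} (h : LinearIndependent R ![u, v, w]) {x y z x' y' z' : R}
    (he : x • u + y • v + z • w = x' • u + y' • v + z' • w) : x = x' ∧ y = y' ∧ z = z' := by
  have := Fintype.linearIndependent_iffₛ.mp h ![x, y, z] ![x', y', z']
    (by simpa [Fin.sum_univ_three] using he)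
  exact ⟨this 0, this 1, this 2⟩

theorem linearIndependent_of_det_dotProduct_ne_zero {ι : Type*} [Fintype ι] [DecidableEq ι]
    {n : ℕ} (v : ι → Fin n → ℝ) (h : (Matrix.of fun a b => v a ⬝ᵥ v b).det ≠ 0) :
    LinearIndependent ℝ v := by
  have hgram : Matrix.gram ℝ (fun a => WithLp.toLp 2 (v a)) = Matrix.of fun a b => v a ⬝ᵥ v b := by
    ext a b
    rw [Matrix.gram_apply, EuclideanSpace.inner_toLp_toLp, star_trivial, dotProduct_comm,
      Matrix.of_apply]
  exact (Matrix.linearIndependent_of_det_gram_ne_zero (hgram ▸ h)).map'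
    (WithLp.linearEquiv 2 ℝ (Fin n → ℝ)).toLinearMap (LinearEquiv.ker _)

def diagForm (c u v w : ℝ) : ℝ := (u + v + w) ^ 2 + c * (u ^ 2 + v ^ 2 + w ^ 2)

theorem diagForm_nonneg {c : ℝ} (hc : 0 ≤ c) (u v w : ℝ) : 0 ≤ diagForm c u v w := by
  unfold diagForm
  positivity

theorem diagForm_eq_zero_iff {c : ℝ} (hc : 0 < c) {u v w : ℝ} :
    diagForm c u v w = 0 ↔ u = 0 ∧ v = 0 ∧ w = 0 := by
  refine ⟨fun h => ?_, fun ⟨hu, hv, hw⟩ => by simp [diagForm, hu, hv, hw]⟩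
  have hsum : u ^ 2 + v ^ 2 + w ^ 2 = 0 := by
    unfold diagForm at h
    nlinarith [sq_nonneg (u + v + w), sq_nonneg u, sq_nonneg v, sq_nonneg w]
  refine ⟨?_, ?_, ?_⟩ <;> nlinarith [sq_nonneg u, sq_nonneg v, sq_nonneg w]

theorem linear_add_diagForm_eq_of_isCrit {c p q r u₀ v₀ w₀ : ℝ}
    (hp : p + (u₀ + v₀ + w₀) + c * u₀ = 0) (hq : q + (u₀ + v₀ + w₀) + c * v₀ = 0)
    (hr : r + (u₀ + v₀ + w₀) + c * w₀ = 0) (u v w : ℝ) :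
    2 * (p * u + q * v + r * w) + diagForm c u v w
      = 2 * (p * u₀ + q * v₀ + r * w₀) + diagForm c u₀ v₀ w₀
        + diagForm c (u - u₀) (v - v₀) (w - w₀) := by
  unfold diagForm
  linear_combination 2 * (u - u₀) * hp + 2 * (v - v₀) * hq + 2 * (w - w₀) * hr

section TraceShift

variable {n : ℕ} (T : Fin n → Fin n → Fin n → ℝ)

def traceShiftNormSq (U V W : Fin n → ℝ) : ℝ :=
  ∑ i, ∑ j, ∑ k, (T i j k + U i * (if j = k then 1 else 0) + V j * (if i = k then 1 else 0)
    + W k * (if i = j then 1 else 0)) ^ 2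

theorem traceShiftNormSq_eq (U V W : Fin n → ℝ) :
    traceShiftNormSq T U V W = ∑ i, ∑ j, ∑ k, T i j k ^ 2
      + ∑ i, (2 * ((∑ l, T i l l) * U i + (∑ l, T l i l) * V i + (∑ l, T l l i) * W i)
        + diagForm ((n : ℝ) - 1) (U i) (V i) (W i)) := by
  have hsq : ∀ t u v w : ℝ, (t + u + v + w) ^ 2 = t ^ 2 + 2 * t * u + 2 * t * v + 2 * t * w
      + u ^ 2 + v ^ 2 + w ^ 2 + 2 * u * v + 2 * u * w + 2 * v * w := fun _ _ _ _ => by ring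
  have hU : ∑ i, ∑ j, 2 * T i j j * U i = ∑ i, 2 * ((∑ j, T i j j) * U i) := by
    simp only [mul_sum, sum_mul, mul_assoc]
  have hV : ∑ i, ∑ j, 2 * T i j i * V j = ∑ j, 2 * ((∑ i, T i j i) * V j) := by
    rw [sum_comm]
    simp only [mul_sum, sum_mul, mul_assoc]
  have hW : ∑ i, ∑ j, 2 * T i i j * W j = ∑ j, 2 * ((∑ i, T i i j) * W j) := by
    rw [sum_comm]
    simp only [mul_sum, sum_mul, mul_assoc]
  unfold traceShiftNormSq diagForm
  simp only [hsq, sum_add_distrib]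
  simp only [mul_ite, mul_one, mul_zero, sum_ite_eq, mem_univ, ↓reduceIte, sum_ite_irrel,
    sum_const_zero, ite_pow, ne_eq, OfNat.ofNat_ne_zero, not_false_eq_true, zero_pow, sum_const,
    card_univ, Fintype.card_fin, nsmul_eq_mul, ite_mul, zero_mul, sum_ite_eq']
  rw [hU, hV, hW]
  simp only [mul_sum, add_assoc, ← sum_add_distrib]
  exact sum_congr rfl fun i _ => by ring

variable {T} {T1 T2 T3 : Fin n → ℝ} {a b : ℝ}

theorem traceShiftNormSq_eq_add (hT1 : ∀ i, T1 i = ∑ l, T i l l)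
    (hT2 : ∀ i, T2 i = ∑ l, T l i l) (hT3 : ∀ i, T3 i = ∑ l, T l l i)
    (hab₁ : a * n + 2 * b = -1) (hab₂ : a + (n + 1) * b = 0) (U V W : Fin n → ℝ) :
    traceShiftNormSq T U V W
      = traceShiftNormSq T (a • T1 + b • T2 + b • T3) (b • T1 + a • T2 + b • T3)
          (b • T1 + b • T2 + a • T3)
        + ∑ i, diagForm ((n : ℝ) - 1) (U i - (a * T1 i + b * T2 i + b * T3 i))
            (V i - (b * T1 i + a * T2 i + b * T3 i)) (W i - (b * T1 i + b * T2 i + a * T3 i)) := by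
  rw [traceShiftNormSq_eq, traceShiftNormSq_eq, add_assoc]
  congr 1
  rw [← sum_add_distrib]
  simp only [← hT1, ← hT2, ← hT3, Pi.add_apply, Pi.smul_apply, smul_eq_mul]
  refine sum_congr rfl fun i _ => linear_add_diagForm_eq_of_isCrit ?_ ?_ ?_ _ _ _
  · linear_combination T1 i * hab₁ + (T2 i + T3 i) * hab₂
  · linear_combination T2 i * hab₁ + (T1 i + T3 i) * hab₂
  · linear_combination T3 i * hab₁ + (T1 i + T2 i) * hab₂

theorem traceShiftNormSq_le (hT1 : ∀ i, T1 i = ∑ l, T i l l)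
    (hT2 : ∀ i, T2 i = ∑ l, T l i l) (hT3 : ∀ i, T3 i = ∑ l, T l l i)
    (hab₁ : a * n + 2 * b = -1) (hab₂ : a + (n + 1) * b = 0) (U V W : Fin n → ℝ) :
    traceShiftNormSq T (a • T1 + b • T2 + b • T3) (b • T1 + a • T2 + b • T3)
        (b • T1 + b • T2 + a • T3) ≤ traceShiftNormSq T U V W := by
  rw [traceShiftNormSq_eq_add hT1 hT2 hT3 hab₁ hab₂ U V W]
  refine le_add_of_nonneg_right (sum_nonneg fun i _ => diagForm_nonneg ?_ _ _ _)
  have : (1 : ℝ) ≤ n := by exact_mod_cast i.pos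
  linarith

theorem traceShiftNormSq_eq_iff (hn : 2 ≤ n) (hT1 : ∀ i, T1 i = ∑ l, T i l l)
    (hT2 : ∀ i, T2 i = ∑ l, T l i l) (hT3 : ∀ i, T3 i = ∑ l, T l l i)
    (hab₁ : a * n + 2 * b = -1) (hab₂ : a + (n + 1) * b = 0) {U V W : Fin n → ℝ} :
    traceShiftNormSq T U V W
        = traceShiftNormSq T (a • T1 + b • T2 + b • T3) (b • T1 + a • T2 + b • T3)
          (b • T1 + b • T2 + a • T3)
      ↔ U = a • T1 + b • T2 + b • T3 ∧ V = b • T1 + a • T2 + b • T3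
          ∧ W = b • T1 + b • T2 + a • T3 := by
  refine ⟨fun h => ?_, fun ⟨hU, hV, hW⟩ => by rw [hU, hV, hW]⟩
  have hc : (0 : ℝ) < n - 1 := by
    have : (2 : ℝ) ≤ n := by exact_mod_cast hn
    linarith
  rw [traceShiftNormSq_eq_add hT1 hT2 hT3 hab₁ hab₂ U V W, add_eq_left,
    sum_eq_zero_iff_of_nonneg fun i _ => diagForm_nonneg hc.le _ _ _] at h
  have hzero := fun i => (diagForm_eq_zero_iff hc).mp (h i (mem_univ i))
  refine ⟨funext fun i => ?_, funext fun i => ?_, funext fun i => ?_⟩ <;>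
    simp only [Pi.add_apply, Pi.smul_apply, smul_eq_mul] <;> linarith [hzero i]

end TraceShift

theorem stmt15 (n : ℕ) (hn : 2 ≤ n) (T : Fin n → Fin n → Fin n → ℝ)
    (T1 T2 T3 : Fin n → ℝ)
    (hT1 : ∀ i, T1 i = ∑ l, T i l l)
    (hT2 : ∀ i, T2 i = ∑ l, T l i l)
    (hT3 : ∀ i, T3 i = ∑ l, T l l i)
    (G : Matrix (Fin 3) (Fin 3) ℝ)
    (hG : G = !![∑ i, T1 i * T1 i, ∑ i, T1 i * T2 i, ∑ i, T1 i * T3 i;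
                 ∑ i, T2 i * T1 i, ∑ i, T2 i * T2 i, ∑ i, T2 i * T3 i;
                 ∑ i, T3 i * T1 i, ∑ i, T3 i * T2 i, ∑ i, T3 i * T3 i])
    (hdet : G.det ≠ 0)
    (f : ℝ → ℝ → ℝ → ℝ → ℝ → ℝ → ℝ → ℝ → ℝ → ℝ)
    (hf : ∀ x₁ x₂ x₃ y₁ y₂ y₃ z₁ z₂ z₃,
      f x₁ x₂ x₃ y₁ y₂ y₃ z₁ z₂ z₃
        = ∑ i, ∑ j, ∑ k,
            (T i j k
              + x₁ * T1 i * (if j = k then (1:ℝ) else 0)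
              + x₂ * T1 j * (if i = k then (1:ℝ) else 0)
              + x₃ * T1 k * (if i = j then (1:ℝ) else 0)
              + y₁ * T2 i * (if j = k then (1:ℝ) else 0)
              + y₂ * T2 j * (if i = k then (1:ℝ) else 0)
              + y₃ * T2 k * (if i = j then (1:ℝ) else 0)
              + z₁ * T3 i * (if j = k then (1:ℝ) else 0)
              + z₂ * T3 j * (if i = k then (1:ℝ) else 0)
              + z₃ * T3 k * (if i = j then (1:ℝ) else 0)) ^ 2)
    (a b : ℝ)
    (ha : a = - ((n : ℝ) + 1) / (((n : ℝ) - 1) * ((n : ℝ) + 2)))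
    (hb : b = 1 / (((n : ℝ) - 1) * ((n : ℝ) + 2))) :
    (∀ x₁ x₂ x₃ y₁ y₂ y₃ z₁ z₂ z₃ : ℝ,
        f a b b b a b b b a ≤ f x₁ x₂ x₃ y₁ y₂ y₃ z₁ z₂ z₃)
    ∧ (∀ x₁ x₂ x₃ y₁ y₂ y₃ z₁ z₂ z₃ : ℝ,
        f x₁ x₂ x₃ y₁ y₂ y₃ z₁ z₂ z₃ = f a b b b a b b b a →
          x₁ = a ∧ x₂ = b ∧ x₃ = b ∧ y₁ = b ∧ y₂ = a ∧ y₃ = b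
            ∧ z₁ = b ∧ z₂ = b ∧ z₃ = a) := by
  have hn' : (2 : ℝ) ≤ n := by exact_mod_cast hn
  have hn₁ : (n : ℝ) - 1 ≠ 0 := by linarith
  have hn₂ : (n : ℝ) + 2 ≠ 0 := by linarith
  have hab₁ : a * n + 2 * b = -1 := by rw [ha, hb]; field_simp; ring
  have hab₂ : a + (n + 1) * b = 0 := by rw [ha, hb]; field_simp; ring
  have hf' : ∀ x₁ x₂ x₃ y₁ y₂ y₃ z₁ z₂ z₃, f x₁ x₂ x₃ y₁ y₂ y₃ z₁ z₂ z₃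
      = traceShiftNormSq T (x₁ • T1 + y₁ • T2 + z₁ • T3) (x₂ • T1 + y₂ • T2 + z₂ • T3)
          (x₃ • T1 + y₃ • T2 + z₃ • T3) := fun x₁ x₂ x₃ y₁ y₂ y₃ z₁ z₂ z₃ => by
    simp only [hf, traceShiftNormSq, Pi.add_apply, Pi.smul_apply, smul_eq_mul]
    exact sum_congr rfl fun i _ => sum_congr rfl fun j _ => sum_congr rfl fun k _ => by ring
  have hli : LinearIndependent ℝ ![T1, T2, T3] := by
    refine linearIndependent_of_det_dotProduct_ne_zero _ ?_
    convert hdet using 2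
    rw [hG]
    ext p q
    fin_cases p <;> fin_cases q <;> rfl
  refine ⟨fun x₁ x₂ x₃ y₁ y₂ y₃ z₁ z₂ z₃ => ?_, fun x₁ x₂ x₃ y₁ y₂ y₃ z₁ z₂ z₃ h => ?_⟩
  · rw [hf', hf']
    exact traceShiftNormSq_le hT1 hT2 hT3 hab₁ hab₂ _ _ _
  · rw [hf', hf', traceShiftNormSq_eq_iff hn hT1 hT2 hT3 hab₁ hab₂] at h
    obtain ⟨hU, hV, hW⟩ := h
    obtain ⟨hx₁, hy₁, hz₁⟩ := hli.eq_of_fin_three_smul_add_eq hU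
    obtain ⟨hx₂, hy₂, hz₂⟩ := hli.eq_of_fin_three_smul_add_eq hV
    obtain ⟨hx₃, hy₃, hz₃⟩ := hli.eq_of_fin_three_smul_add_eq hW
    exact ⟨hx₁, hx₂, hx₃, hy₁, hy₂, hy₃, hz₁, hz₂, hz₃⟩
end
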